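/- arXiv:1404.3807 — 3 statements merged into one kernel-verified Lean document; each statement's English description precedes it below -/
import Mathlib

section
/- Assume that every admissible set of size k (for some fixed k ≥ 2) has infinitely many translates n + H containing at least two primes. Then for d = ∏_{p ≤ k} p and every N ≥ 1, the set {dN, 2dN, ..., (k-1)dN} contains at least one Polignac number. -/
def Admissible (H : Finset ℤ) : Prop :=
  ∀ p : ℕ, p.Prime → ∃ n : ZMod p, ∀ h ∈ H, (h : ZMod p) ≠ n

def IsPolignac (m : ℕ) : Prop :=
  {p : ℕ | p.Prime ∧ (p + m).Prime}.Infinite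

/-!
The set `H = {0, dN, 2dN, …, (k-1)dN}` is admissible: every prime `p ≤ k` divides `d`, so `H`
misses the class `1 mod p`, while `k` elements cannot cover all classes mod a prime `p > k`.
Infinitely many translates `n + H` contain two primes, and there are only finitely many pairs
`i dN < j dN` in `H`, so one pair occurs infinitely often, which makes `(j - i) dN` Polignac.
-/

open Finset

/-- Integer primes may be negative: a pair `x < 0` of them with `x + m < 0` yields the natural
prime pair `-(x + m), -x`, and only finitely many pairs straddle `0`. -/
lemma isPolignac_of_infinite_int (m : ℕ) (h : {x : ℤ | Prime x ∧ Prime (x + m)}.Infinite) :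
    IsPolignac m := by
  by_contra hfin
  rw [IsPolignac, Set.not_infinite] at hfin
  refine h ((((hfin.image fun p : ℕ => (p : ℤ)).union
    (hfin.image fun p : ℕ => -((p : ℤ) + m))).union (Set.finite_Icc (-(m : ℤ)) 0)).subset ?_)
  rintro x ⟨hx, hxm⟩
  rcases lt_or_ge 0 x with hpos | hnonpos
  · lift x to ℕ using hpos.le
    exact Or.inl <| Or.inl ⟨x, ⟨Nat.prime_iff_prime_int.mpr hx,
      Nat.prime_iff_prime_int.mpr (by exact_mod_cast hxm)⟩, rfl⟩
  · rcases lt_or_ge (x + m) 0 with hneg | hge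
    · obtain ⟨p, hp⟩ := Int.eq_ofNat_of_zero_le (neg_nonneg.mpr hneg.le)
      have hpm : ((p + m : ℕ) : ℤ) = -x := by push_cast; linarith
      refine Or.inl <| Or.inr ⟨p, ⟨Nat.prime_iff_prime_int.mpr (hp ▸ hxm.neg),
        Nat.prime_iff_prime_int.mpr (hpm ▸ hx.neg)⟩, by simp [← hp]⟩
    · exact Or.inr ⟨by linarith, hnonpos⟩

lemma isPolignac_of_infinite_translates {a b : ℤ} {m : ℕ} (hab : b = a + m)
    (h : {n : ℤ | Prime (n + a) ∧ Prime (n + b)}.Infinite) : IsPolignac m := by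
  refine isPolignac_of_infinite_int m ((h.image (add_left_injective a).injOn).mono ?_)
  rintro _ ⟨n, ⟨hna, hnb⟩, rfl⟩
  rw [hab, ← add_assoc] at hnb
  exact ⟨hna, hnb⟩

lemma exists_lt_infinite_of_infinite_pairs {H : Finset ℤ} {P : ℤ → Prop}
    (h : {n : ℤ | ∃ h₁ ∈ H, ∃ h₂ ∈ H, h₁ ≠ h₂ ∧ P (n + h₁) ∧ P (n + h₂)}.Infinite) :
    ∃ h₁ ∈ H, ∃ h₂ ∈ H, h₁ < h₂ ∧ {n : ℤ | P (n + h₁) ∧ P (n + h₂)}.Infinite := by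
  by_contra! hfin
  have hU : (⋃ a ∈ H, ⋃ b ∈ H.filter (a < ·), {n : ℤ | P (n + a) ∧ P (n + b)}).Finite :=
    H.finite_toSet.biUnion fun a ha => (H.filter (a < ·)).finite_toSet.biUnion fun b hb =>
      hfin a ha b (mem_filter.mp hb).1 (mem_filter.mp hb).2
  refine h (hU.subset ?_)
  rintro n ⟨h₁, hh₁, h₂, hh₂, hne, hp₁, hp₂⟩
  simp only [Set.mem_iUnion, mem_filter, Set.mem_ofPred_eq]
  rcases hne.lt_or_gt with hlt | hgt
  · exact ⟨h₁, hh₁, h₂, ⟨hh₂, hlt⟩, hp₁, hp₂⟩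
  · exact ⟨h₂, hh₂, h₁, ⟨hh₁, hgt⟩, hp₂, hp₁⟩

lemma exists_zmod_forall_ne_of_card_lt {H : Finset ℤ} {p : ℕ} [NeZero p] (hp : H.card < p) :
    ∃ n : ZMod p, ∀ h ∈ H, (h : ZMod p) ≠ n := by
  by_contra! hall
  have hsub : (univ : Finset (ZMod p)) ⊆ H.image (↑) := fun n _ => by
    obtain ⟨h, hh, rfl⟩ := hall n
    exact mem_image_of_mem _ hh
  have := (card_le_card hsub).trans card_image_le
  rw [card_univ, ZMod.card] at this
  omega

lemma admissible_of_forall_dvd {H : Finset ℤ} {D : ℤ}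
    (hD : ∀ p : ℕ, p.Prime → p ≤ H.card → (p : ℤ) ∣ D) (hH : ∀ h ∈ H, D ∣ h) :
    Admissible H := by
  intro p hp
  have := Fact.mk hp
  by_cases hpH : p ≤ H.card
  · refine ⟨1, fun h hh => ?_⟩
    rw [(ZMod.intCast_zmod_eq_zero_iff_dvd h p).mpr ((hD p hp hpH).trans (hH h hh))]
    exact zero_ne_one
  · exact exists_zmod_forall_ne_of_card_lt (not_le.mp hpH)

theorem stmt_1_general (k : ℕ)
    (hyp : ∀ H : Finset ℤ, H.card = k → Admissible H →
      {n : ℤ | ∃ h₁ ∈ H, ∃ h₂ ∈ H, h₁ ≠ h₂ ∧ Prime (n + h₁) ∧ Prime (n + h₂)}.Infinite)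
    (N : ℕ) (hN : 1 ≤ N)
    (d : ℕ) (hd : d = ∏ p ∈ (Finset.range (k + 1)).filter Nat.Prime, p) :
    ∃ i ∈ Finset.Icc 1 (k - 1), IsPolignac (i * d * N) := by
  have hd₀ : 0 < d := hd ▸ prod_pos fun p hp => (mem_filter.mp hp).2.pos
  set D : ℤ := d * N
  have hD : 0 < D := by positivity
  set H := (range k).image fun i : ℕ => (i : ℤ) * D
  have hinj : Function.Injective fun i : ℕ => (i : ℤ) * D := fun i j hij => by
    exact_mod_cast mul_right_cancel₀ hD.ne' hij
  have hcard : H.card = k := by rw [card_image_of_injective _ hinj, card_range]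
  have hadm : Admissible H := by
    refine admissible_of_forall_dvd (D := D) (fun p hp hpk => ?_) ?_
    · have hpd : p ∣ d := hd ▸ dvd_prod_of_mem _ (mem_filter.mpr ⟨mem_range.mpr (by omega), hp⟩)
      exact (Int.natCast_dvd_natCast.mpr hpd).mul_right _
    · simp only [H, mem_image]
      rintro _ ⟨i, -, rfl⟩
      exact dvd_mul_left _ _
  obtain ⟨_, hi, _, hj, hlt, hinf⟩ := exists_lt_infinite_of_infinite_pairs (hyp H hcard hadm)
  obtain ⟨i, -, rfl⟩ := mem_image.mp hi
  obtain ⟨j, hjk, rfl⟩ := mem_image.mp hj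
  have hij : i < j := by exact_mod_cast (mul_lt_mul_iff_left₀ hD).mp hlt
  refine ⟨j - i, mem_Icc.mpr ⟨by omega, by have := mem_range.mp hjk; omega⟩,
    isPolignac_of_infinite_translates ?_ hinf⟩
  push_cast [D, Nat.cast_sub hij.le]
  ring

theorem stmt_1 (k : ℕ) (hk : 2 ≤ k)
    (hyp : ∀ H : Finset ℤ, H.card = k → Admissible H →
      {n : ℤ | ∃ h₁ ∈ H, ∃ h₂ ∈ H, h₁ ≠ h₂ ∧ Prime (n + h₁) ∧ Prime (n + h₂)}.Infinite)
    (N : ℕ) (hN : 1 ≤ N)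
    (d : ℕ) (hd : d = ∏ p ∈ (Finset.range (k + 1)).filter Nat.Prime, p) :
    ∃ i ∈ Finset.Icc 1 (k - 1), IsPolignac (i * d * N) :=
  stmt_1_general k hyp N hN d hd
end

section
/- Assume that every admissible set of size k has infinitely many translates containing at least two primes. Then for every positive integer q, the arithmetic progression q, 2q, 3q, ... contains infinitely many Polignac numbers. -/
/-!
For a bound `B`, take `M = k! (B + 1) q` and the progression `H = {0, M, …, (k - 1) M}`.
It is admissible: a prime `p ≤ k` divides every element, so `H` misses the class `1`, and a
prime `p > k` cannot be hit `k` times. Infinitely many translates of `H` contain two primes,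
so by pigeonhole one fixed pair `i M < j M` does infinitely often, which makes `(j - i) M` a
Polignac number; it is a multiple of `q` exceeding `B`.
-/

open Finset
open scoped Nat

theorem admissible_of_forall_prime_le_card_dvd {H : Finset ℤ}
    (hdvd : ∀ p : ℕ, p.Prime → p ≤ #H → ∀ h ∈ H, (p : ℤ) ∣ h) : Admissible H := by
  intro p hp
  have := Fact.mk hp
  by_cases hpH : p ≤ #H
  · refine ⟨1, fun h hh hh1 => zero_ne_one (α := ZMod p) ?_⟩
    rw [← hh1, eq_comm, ZMod.intCast_zmod_eq_zero_iff_dvd]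
    exact hdvd p hp hpH h hh
  · have hcard : #(H.image ((↑) : ℤ → ZMod p)) < #(univ : Finset (ZMod p)) := by
      rw [card_univ, ZMod.card]
      exact (card_image_le).trans_lt (not_le.mp hpH)
    obtain ⟨n, -, hn⟩ := exists_mem_notMem_of_card_lt_card hcard
    exact ⟨n, fun h hh hhn => hn (mem_image.mpr ⟨h, hh, hhn⟩)⟩

theorem admissible_image_range_mul {k M : ℕ} (hM : k ! ∣ M) :
    Admissible ((range k).image fun i : ℕ => ((i * M : ℕ) : ℤ)) := by
  refine admissible_of_forall_prime_le_card_dvd fun p hp hpk h hh => ?_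
  obtain ⟨i, -, rfl⟩ := mem_image.mp hh
  have hpM : p ∣ M := ((hp.dvd_factorial).mpr (hpk.trans card_image_le |>.trans
    (card_range k).le)).trans hM
  exact Int.natCast_dvd_natCast.mpr (hpM.mul_left i)

theorem card_image_range_mul (k : ℕ) {M : ℕ} (hM : M ≠ 0) :
    #((range k).image fun i : ℕ => ((i * M : ℕ) : ℤ)) = k := by
  have hinj : Function.Injective fun i : ℕ => ((i * M : ℕ) : ℤ) :=
    Nat.cast_injective.comp (mul_left_injective₀ hM)
  rw [card_image_of_injective _ hinj, card_range]

theorem exists_lt_infinite_prime_pair {H : Finset ℤ}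
    (h : {n : ℤ | ∃ h₁ ∈ H, ∃ h₂ ∈ H, h₁ ≠ h₂ ∧ Prime (n + h₁) ∧ Prime (n + h₂)}.Infinite) :
    ∃ a ∈ H, ∃ b ∈ H, a < b ∧ {n : ℤ | Prime (n + a) ∧ Prime (n + b)}.Infinite := by
  by_contra! hfin
  refine h (((H ×ˢ H).filter fun x => x.1 < x.2).finite_toSet.biUnion
    (t := fun x => {n : ℤ | Prime (n + x.1) ∧ Prime (n + x.2)}) ?_ |>.subset ?_)
  · rintro ⟨a, b⟩ hab
    simp only [coe_filter, mem_product, Set.mem_ofPred_eq] at hab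
    exact hfin a hab.1.1 b hab.1.2 hab.2
  · rintro n ⟨a, ha, b, hb, hne, hpa, hpb⟩
    simp only [coe_filter, mem_product, Set.mem_iUnion, Set.mem_ofPred_eq, Prod.exists]
    rcases hne.lt_or_gt with hlt | hlt
    · exact ⟨a, b, ⟨⟨ha, hb⟩, hlt⟩, hpa, hpb⟩
    · exact ⟨b, a, ⟨⟨hb, ha⟩, hlt⟩, hpb, hpa⟩

theorem natAbs_mem_of_prime_pair {p : ℤ} {d : ℕ} (hp0 : 0 ≤ p) (hp : Prime p)
    (hpd : Prime (p + d)) : p.natAbs ∈ {r : ℕ | r.Prime ∧ (r + d).Prime} := by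
  refine ⟨Int.prime_iff_natAbs_prime.mp hp, Nat.prime_iff_prime_int.mpr ?_⟩
  rwa [Nat.cast_add, Int.natCast_natAbs, abs_of_nonneg hp0]

/-- An integer prime pair `(p, p + d)` with `p + d < 0` is `(-(r + d), -r)` for the natural
prime pair `(r, r + d)`, `r = -(p + d)`. -/
theorem IsPolignac.of_int {d : ℕ} (h : {p : ℤ | Prime p ∧ Prime (p + d)}.Infinite) :
    IsPolignac d := by
  by_contra hfin
  set T : Set ℤ := (↑) '' {r : ℕ | r.Prime ∧ (r + d).Prime}
  have hT : T.Finite := (Set.not_infinite.mp hfin).image _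
  refine h ((hT.union (hT.image fun r : ℤ => -(r + d))).union (Set.finite_Icc (-d : ℤ) 0)
    |>.subset ?_)
  rintro p ⟨hp, hpd⟩
  rcases lt_or_ge 0 p with hpos | hnonpos
  · exact Or.inl (Or.inl
      ⟨_, natAbs_mem_of_prime_pair hpos.le hp hpd, Int.natAbs_of_nonneg hpos.le⟩)
  rcases lt_or_ge (p + d) 0 with hneg | hge
  · have hmem := natAbs_mem_of_prime_pair (p := -(p + d)) (d := d) (by omega) hpd.neg
      (by rw [show -(p + d) + d = -p by ring]; exact hp.neg)
    refine Or.inl (Or.inr ⟨_, ⟨_, hmem, rfl⟩, ?_⟩)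
    rw [Int.natAbs_of_nonneg (by omega)]
    ring
  · exact Or.inr ⟨by omega, hnonpos⟩

theorem isPolignac_of_infinite_prime_pair {a b : ℤ} {d : ℕ} (hd : b = a + d)
    (h : {n : ℤ | Prime (n + a) ∧ Prime (n + b)}.Infinite) : IsPolignac d := by
  refine IsPolignac.of_int ((h.image (add_left_injective a).injOn).mono ?_)
  rintro _ ⟨n, ⟨hna, hnb⟩, rfl⟩
  exact ⟨hna, by rwa [add_assoc, ← hd]⟩

theorem stmt_2_general (k : ℕ)
    (hyp : ∀ H : Finset ℤ, H.card = k → Admissible H →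
      {n : ℤ | ∃ h₁ ∈ H, ∃ h₂ ∈ H, h₁ ≠ h₂ ∧ Prime (n + h₁) ∧ Prime (n + h₂)}.Infinite)
    (q : ℕ) (hq : 0 < q) :
    {m : ℕ | IsPolignac m ∧ ∃ j : ℕ, 0 < j ∧ m = j * q}.Infinite := by
  refine Set.infinite_of_forall_exists_gt fun B => ?_
  set M := k ! * (B + 1) * q with hM
  have hM0 : 0 < M := by positivity
  obtain ⟨a, ha, b, hb, hab, hinf⟩ := exists_lt_infinite_prime_pair
    (hyp _ (card_image_range_mul k hM0.ne') (admissible_image_range_mul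
      ((dvd_mul_right _ _).mul_right q)))
  obtain ⟨i, -, rfl⟩ := mem_image.mp ha
  obtain ⟨j, -, rfl⟩ := mem_image.mp hb
  have hij : i < j := Nat.lt_of_mul_lt_mul_right (Nat.cast_lt.mp hab)
  have hd : ((j * M : ℕ) : ℤ) = ((i * M : ℕ) : ℤ) + ((j - i) * M : ℕ) := by
    rw [← Nat.cast_add, ← add_mul, Nat.add_sub_cancel' hij.le]
  refine ⟨(j - i) * M, ⟨isPolignac_of_infinite_prime_pair hd hinf,
    (j - i) * (k ! * (B + 1)), Nat.mul_pos (by omega) (by positivity), by rw [hM]; ring⟩, ?_⟩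
  calc B < B + 1 := lt_add_one B
    _ ≤ M := le_mul_of_le_of_one_le (Nat.le_mul_of_pos_left _ (Nat.factorial_pos k)) hq
    _ ≤ (j - i) * M := Nat.le_mul_of_pos_left _ (by omega)

theorem stmt_2 (k : ℕ) (hk : 2 ≤ k)
    (hyp : ∀ H : Finset ℤ, H.card = k → Admissible H →
      {n : ℤ | ∃ h₁ ∈ H, ∃ h₂ ∈ H, h₁ ≠ h₂ ∧ Prime (n + h₁) ∧ Prime (n + h₂)}.Infinite)
    (q : ℕ) (hq : 0 < q) :
    {m : ℕ | IsPolignac m ∧ ∃ j : ℕ, 0 < j ∧ m = j * q}.Infinite :=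
  stmt_2_general k hyp q hq
end

section
/- If there exists a constant C > 0 such that every interval [m, m + C] contains at least one Polignac number, then the set of Polignac numbers contains arbitrarily long arithmetic progressions. -/
theorem Combinatorics.exists_homothetic_copy_of_forall_exists_add_mem {M : Type*}
    [AddCommMonoid M] {S : Set M} (F : Finset M) (hS : ∀ m, ∃ k ∈ F, m + k ∈ S) (T : Finset M) :
    ∃ d > 0, ∃ a : M, ∀ t ∈ T, d • t + a ∈ S := by
  choose colour hcolour_mem hcolour using fun m => hS m
  obtain ⟨d, hd, b, k, hmono⟩ :=
    exists_mono_homothetic_copy T fun m => (⟨colour m, hcolour_mem m⟩ : F)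
  refine ⟨d, hd, b + k, fun t ht => ?_⟩
  have hk : colour (d • t + b) = k := congrArg Subtype.val (hmono t ht)
  simpa [hk, add_assoc] using hcolour (d • t + b)

theorem Nat.exists_arithProgression_of_forall_exists_mem_Icc {S : Set ℕ} (C : ℕ)
    (hS : ∀ m, ∃ x ∈ Set.Icc m (m + C), x ∈ S) (L : ℕ) :
    ∃ a d : ℕ, 0 < d ∧ ∀ i < L, a + i * d ∈ S := by
  have hcover : ∀ m, ∃ k ∈ Finset.range (C + 1), m + k ∈ S := by
    intro m
    obtain ⟨x, ⟨hmx, hxC⟩, hx⟩ := hS m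
    exact ⟨x - m, Finset.mem_range.mpr (by omega), by rwa [Nat.add_sub_cancel' hmx]⟩
  obtain ⟨d, hd, a, hprog⟩ :=
    Combinatorics.exists_homothetic_copy_of_forall_exists_add_mem _ hcover (Finset.range L)
  refine ⟨a, d, hd, fun i hi => ?_⟩
  simpa [smul_eq_mul, mul_comm, add_comm] using hprog i (Finset.mem_range.mpr hi)

theorem stmt_5_general (C : ℕ)
    (hyp : ∀ m : ℕ, 1 ≤ m → ∃ x ∈ Set.Icc m (m + C), IsPolignac x) :
    ∀ L : ℕ, ∃ a d : ℕ, 0 < d ∧ ∀ i < L, IsPolignac (a + i * d) := by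
  refine Nat.exists_arithProgression_of_forall_exists_mem_Icc (S := {x | IsPolignac x}) (C + 1) ?_
  intro m
  obtain ⟨x, ⟨hmx, hxC⟩, hx⟩ := hyp (m + 1) (Nat.le_add_left 1 m)
  exact ⟨x, ⟨by omega, by omega⟩, hx⟩

theorem stmt_5 (C : ℕ) (hC : 0 < C)
    (hyp : ∀ m : ℕ, 1 ≤ m → ∃ x ∈ Set.Icc m (m + C), IsPolignac x) :
    ∀ L : ℕ, ∃ a d : ℕ, 0 < d ∧ ∀ i < L, IsPolignac (a + i * d) :=
  stmt_5_general C hyp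
end
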